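/- For a prime p, a positive integer n, and a quadratic form Q over ℚ_p in n variables, the quotient set R(Q(ℤ^n)) is dense in ℚ_p if and only if R(Q(ℤ_p^n)) is dense in ℚ_p. -/

import Mathlib

/-!
Since `ℤ` is dense in `ℤ_p` and a quadratic form is continuous, `Q(ℤ_pⁿ)` lies between `Q(ℤⁿ)`
and its closure. Division is continuous away from `0`, so the quotient sets are squeezed in the
same way, and a set is dense exactly when its closure is.
-/

def quotSet {K : Type*} [DivisionRing K] (A : Set K) : Set K :=
  {x | ∃ a ∈ A, ∃ b ∈ A, b ≠ 0 ∧ x = a / b}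

open Set Matrix

theorem QuadraticMap.continuous_of_pi {R ι : Type*} [CommRing R] [TopologicalSpace R]
    [IsTopologicalRing R] [Fintype ι] (Q : QuadraticMap R (ι → R) R) : Continuous Q := by
  classical
  obtain ⟨B, rfl⟩ := LinearMap.BilinMap.toQuadraticMap_surjective Q
  have hB : ∀ v, B.toQuadraticMap v = v ⬝ᵥ (LinearMap.toMatrix₂' R B *ᵥ v) := fun v => by
    rw [LinearMap.BilinMap.toQuadraticMap_apply, ← Matrix.toLinearMap₂'_apply',
      Matrix.toLinearMap₂'_toMatrix']
  exact (continuous_id.dotProduct (continuous_const.matrix_mulVec continuous_id)).congr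
    fun v => (hB v).symm

section quotSet

variable {K : Type*} [DivisionRing K] {A B : Set K}

theorem quotSet_mono (h : A ⊆ B) : quotSet A ⊆ quotSet B := by
  rintro x ⟨a, ha, b, hb, hb0, rfl⟩
  exact ⟨a, h ha, b, h hb, hb0, rfl⟩

variable [TopologicalSpace K] [ContinuousMul K] [ContinuousInv₀ K] [T1Space K]

theorem quotSet_subset_closure_quotSet (h : B ⊆ closure A) :
    quotSet B ⊆ closure (quotSet A) := by
  rintro _ ⟨a, ha, b, hb, hb0, rfl⟩
  have hb' : b ∈ closure (A ∩ {0}ᶜ) := by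
    rw [inter_comm]
    exact isOpen_compl_singleton.inter_closure ⟨hb0, h hb⟩
  have hab : (a, b) ∈ closure (A ×ˢ (A ∩ {0}ᶜ)) := by
    rw [closure_prod_eq]
    exact ⟨h ha, hb'⟩
  have hdiv : ContinuousAt (fun x : K × K => x.1 / x.2) (a, b) :=
    continuousAt_fst.div continuousAt_snd hb0
  refine closure_mono ?_ (mem_closure_image (f := fun x : K × K => x.1 / x.2) hdiv hab)
  rintro _ ⟨⟨a', b'⟩, ⟨ha', hb', hb0'⟩, rfl⟩
  exact ⟨a', ha', b', hb', hb0', rfl⟩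

theorem dense_quotSet_iff_of_subset_closure (hAB : A ⊆ B) (hBA : B ⊆ closure A) :
    Dense (quotSet A) ↔ Dense (quotSet B) :=
  ⟨fun h => h.mono (quotSet_mono hAB),
    fun h => (h.mono (quotSet_subset_closure_quotSet hBA)).of_closure⟩

end quotSet

theorem stmt1_general (p : ℕ) [Fact p.Prime] (n : ℕ)
    (Q : QuadraticForm ℚ_[p] (Fin n → ℚ_[p])) :
    Dense (quotSet {y : ℚ_[p] | ∃ v : Fin n → ℤ, Q (fun i => (v i : ℚ_[p])) = y}) ↔
    Dense (quotSet {y : ℚ_[p] | ∃ v : Fin n → ℤ_[p], Q (fun i => (v i : ℚ_[p])) = y}) := by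
  have hQ : Continuous fun v : Fin n → ℤ_[p] => Q (fun i => (v i : ℚ_[p])) :=
    Q.continuous_of_pi.comp <| continuous_pi fun i =>
      continuous_subtype_val.comp (continuous_apply i)
  have hdense : DenseRange fun (v : Fin n → ℤ) i => (v i : ℤ_[p]) :=
    DenseRange.piMap fun _ => PadicInt.denseRange_intCast
  apply dense_quotSet_iff_of_subset_closure
  · rintro _ ⟨v, rfl⟩
    exact ⟨fun i => v i, by simp⟩
  · rintro _ ⟨v, rfl⟩
    refine closure_mono ?_ (hQ.range_subset_closure_image_dense hdense ⟨v, rfl⟩)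
    rintro _ ⟨_, ⟨w, rfl⟩, rfl⟩
    exact ⟨w, by simp⟩

theorem stmt1 (p : ℕ) [Fact p.Prime] (n : ℕ) (hn : 0 < n)
    (Q : QuadraticForm ℚ_[p] (Fin n → ℚ_[p])) :
    Dense (quotSet {y : ℚ_[p] | ∃ v : Fin n → ℤ, Q (fun i => (v i : ℚ_[p])) = y}) ↔
    Dense (quotSet {y : ℚ_[p] | ∃ v : Fin n → ℤ_[p], Q (fun i => (v i : ℚ_[p])) = y}) :=
  stmt1_general p n Q
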